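/- Let H be a complex Hilbert space, S : H → H an orthogonal projection, and T : H → H a bounded self-adjoint operator satisfying T = S T S. Suppose there exists a bounded operator Q and a compact operator F with Q T = S + F. Then there exists c > 0 such that ‖T u‖ ≥ c ‖u‖ for every u ∈ range(S) with u ⊥ ker T. -/

import Mathlib

open ContinuousLinearMap
open scoped InnerProductSpace

/-- Spectral gap for an operator `T = S T S` with a parametrix `Q T = S + F`,
`F` compact: `‖T u‖ ≥ c ‖u‖` on `range S ∩ (ker T)ᗮ`. -/
theorem toeplitz_lower_bound_of_parametrix
    {H : Type*} [NormedAddCommGroup H] [InnerProductSpace ℂ H] [CompleteSpace H]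
    (S T Q F : H →L[ℂ] H)
    (hSproj : IsSelfAdjoint S ∧ S * S = S)
    (hT : IsSelfAdjoint T) (hTS : T = S * T * S)
    (hF : IsCompactOperator F)
    (hQ : Q * T = S + F) :
    ∃ c : ℝ, 0 < c ∧ ∀ u ∈ LinearMap.range (S : H →ₗ[ℂ] H),
      (∀ v ∈ LinearMap.ker (T : H →ₗ[ℂ] H), ⟪u, v⟫_ℂ = 0) → c * ‖u‖ ≤ ‖T u‖ := by
  by_contra hcon
  push_neg at hcon
  have key : ∀ n : ℕ, ∃ u, u ∈ LinearMap.range (S : H →ₗ[ℂ] H) ∧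
      (∀ v ∈ LinearMap.ker (T : H →ₗ[ℂ] H), ⟪u, v⟫_ℂ = 0) ∧ ‖T u‖ < (1/(n+1)) * ‖u‖ := by
    intro n
    obtain ⟨u, hu1, hu2, hu3⟩ := hcon (1/(n+1)) (by positivity)
    exact ⟨u, hu1, hu2, hu3⟩
  choose u hu hperp hlt using key
  have hune : ∀ n, ‖u n‖ ≠ 0 := by
    intro n h
    have h2 := hlt n
    rw [h, mul_zero] at h2
    exact absurd h2 (not_lt.2 (norm_nonneg _))
  set v : ℕ → H := fun n => ((‖u n‖ : ℂ))⁻¹ • u n with hv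
  have hvnorm : ∀ n, ‖v n‖ = 1 := by
    intro n
    simp only [hv, norm_smul, norm_inv, Complex.norm_real, Real.norm_eq_abs,
      abs_of_nonneg (norm_nonneg (u n))]
    exact inv_mul_cancel₀ (hune n)
  have hvrange : ∀ n, v n ∈ LinearMap.range (S : H →ₗ[ℂ] H) :=
    fun n => Submodule.smul_mem _ _ (hu n)
  have hvS : ∀ n, S (v n) = v n := by
    intro n
    obtain ⟨x, hx⟩ := hvrange n
    rw [← hx, ContinuousLinearMap.coe_coe, ← ContinuousLinearMap.mul_apply, hSproj.2]
  have hvperp : ∀ n, ∀ z ∈ LinearMap.ker (T : H →ₗ[ℂ] H), ⟪v n, z⟫_ℂ = 0 := by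
    intro n z hz
    simp only [hv, inner_smul_left, hperp n z hz, mul_zero]
  have hvT : ∀ n, ‖T (v n)‖ ≤ 1/(n+1) := by
    intro n
    have : T (v n) = ((‖u n‖ : ℂ))⁻¹ • T (u n) := by simp [hv]
    rw [this, norm_smul, norm_inv, Complex.norm_real, Real.norm_eq_abs,
      abs_of_nonneg (norm_nonneg (u n))]
    have h1 : ‖u n‖⁻¹ * ‖T (u n)‖ ≤ ‖u n‖⁻¹ * ((1/(n+1)) * ‖u n‖) := by
      apply mul_le_mul_of_nonneg_left (le_of_lt (hlt n)) (inv_nonneg.2 (norm_nonneg _))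
    calc ‖u n‖⁻¹ * ‖T (u n)‖ ≤ ‖u n‖⁻¹ * ((1/(n+1)) * ‖u n‖) := h1
      _ = 1/(n+1) := by
          have h3 : ‖u n‖ * ((n:ℝ)+1) ≠ 0 := mul_ne_zero (hune n) (by positivity)
          field_simp
          exact div_self (hune n)
  have hTv0 : Filter.Tendsto (fun n => T (v n)) Filter.atTop (nhds 0) := by
    apply squeeze_zero_norm hvT
    simpa [one_div] using tendsto_one_div_add_atTop_nhds_zero_nat (𝕜 := ℝ)
  -- compactness
  obtain ⟨K, hKc, hKn⟩ := hF
  rw [Metric.mem_nhds_iff] at hKn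
  obtain ⟨ε, hε, hball⟩ := hKn
  set c : ℂ := ((ε/2 : ℝ) : ℂ) with hc
  have hcne : c ≠ 0 := by
    simp only [hc, ne_eq, Complex.ofReal_eq_zero]
    positivity
  have hmem : ∀ n, F (c • v n) ∈ K := by
    intro n
    apply hball
    rw [Metric.mem_ball, dist_zero_right, norm_smul, hvnorm n, mul_one, hc,
      Complex.norm_real, Real.norm_eq_abs, abs_of_nonneg (by positivity : (0:ℝ) ≤ ε/2)]
    linarith
  obtain ⟨y, -, φ, hφ, hconv⟩ := hKc.tendsto_subseq hmem
  have hFv : Filter.Tendsto (fun k => F (v (φ k))) Filter.atTop (nhds (c⁻¹ • y)) := by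
    have h2 := hconv.const_smul c⁻¹
    have h1 : ∀ k, c⁻¹ • F (c • v (φ k)) = F (v (φ k)) := by
      intro k
      rw [map_smul, smul_smul, inv_mul_cancel₀ hcne, one_smul]
    simpa only [Function.comp_def, h1] using h2
  have hQTv : Filter.Tendsto (fun k => Q (T (v (φ k)))) Filter.atTop (nhds 0) := by
    have h1 : Filter.Tendsto (fun k => T (v (φ k))) Filter.atTop (nhds 0) :=
      hTv0.comp hφ.tendsto_atTop
    have h2 := (Q.continuous.tendsto 0).comp h1
    simpa [Function.comp_def] using h2
  have hveq : ∀ n, v n = Q (T (v n)) - F (v n) := by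
    intro n
    have h1 : (Q * T) (v n) = (S + F) (v n) := by rw [hQ]
    simp only [ContinuousLinearMap.mul_apply, ContinuousLinearMap.add_apply, hvS n] at h1
    rw [h1]
    abel
  set L : H := -(c⁻¹ • y) with hL
  have hvL : Filter.Tendsto (fun k => v (φ k)) Filter.atTop (nhds L) := by
    have := hQTv.sub hFv
    simp only [← hveq, zero_sub] at this
    exact this
  have hLnorm : ‖L‖ = 1 := by
    have h1 : Filter.Tendsto (fun k => ‖v (φ k)‖) Filter.atTop (nhds ‖L‖) :=
      hvL.norm
    have h2 : Filter.Tendsto (fun k => ‖v (φ k)‖) Filter.atTop (nhds 1) := by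
      simp only [hvnorm]
      exact tendsto_const_nhds
    exact tendsto_nhds_unique h1 h2
  have hTL : T L = 0 := by
    have h1 : Filter.Tendsto (fun k => T (v (φ k))) Filter.atTop (nhds (T L)) :=
      (T.continuous.tendsto L).comp hvL
    have h2 : Filter.Tendsto (fun k => T (v (φ k))) Filter.atTop (nhds 0) :=
      hTv0.comp hφ.tendsto_atTop
    exact tendsto_nhds_unique h1 h2
  have hLker : L ∈ LinearMap.ker (T : H →ₗ[ℂ] H) := hTL
  have hLL : ⟪L, L⟫_ℂ = 0 := by
    have h1 : Filter.Tendsto (fun k => ⟪v (φ k), L⟫_ℂ) Filter.atTop (nhds ⟪L, L⟫_ℂ) :=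
      hvL.inner tendsto_const_nhds
    have h2 : Filter.Tendsto (fun k => ⟪v (φ k), L⟫_ℂ) Filter.atTop (nhds 0) := by
      have : ∀ k, ⟪v (φ k), L⟫_ℂ = 0 := fun k => hvperp (φ k) L hLker
      simp only [this]
      exact tendsto_const_nhds
    exact tendsto_nhds_unique h1 h2
  have : L = 0 := inner_self_eq_zero.mp hLL
  rw [this, norm_zero] at hLnorm
  norm_num at hLnorm
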